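/- Let F(x) = ₂F₁(a,b;c;x) with a,b,c > 0. If (a−c)(b−c) > 0, then t ↦ log F(1−e^{−t}) is concave on (0,∞); in particular √(F(x)F(y)) ≤ F(1−√((1−x)(1−y))) for all x,y ∈ (0,1), with equality iff x = y. -/

import Mathlib

/-- The rising factorial (Pochhammer symbol) `(a)ₙ = a(a+1)⋯(a+n−1)`. -/
def ascFac (a : ℝ) : ℕ → ℝ
  | 0 => 1
  | n + 1 => ascFac a n * (a + n)

/-- The Gaussian hypergeometric function `₂F₁(a,b;c;x) = Σ (a)ₙ(b)ₙ/((c)ₙ n!) xⁿ`. -/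
noncomputable def hyperF (a b c x : ℝ) : ℝ :=
  ∑' n : ℕ, ascFac a n * ascFac b n / (ascFac c n * n.factorial) * x ^ n

/-!
Write `x = 1 - e^{-t}` and `F(x) = Σ qₙ xⁿ` with `qₙ = hyperCoeff a b c n`. Then
`d/dt log F(1 - e^{-t}) = (1 - x) F'(x) / F(x)`, and the contiguous relation
`(n+1) qₙ₊₁ - n qₙ = wₙ qₙ`, with `wₙ = hyperWeight a b c n = (a+n)(b+n)/(c+n) - n`, turns this
into the ratio `Σ wₙ qₙ xⁿ / Σ qₙ xⁿ`. Since `wₙ - wₙ₊₁ = (a-c)(b-c)/((c+n)(c+n+1)) > 0`, the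
ratio is strictly decreasing in `x`: for `x < y` the double series of
`(Σ wₙ qₙ xⁿ)(Σ qₙ yⁿ) - (Σ wₙ qₙ yⁿ)(Σ qₙ xⁿ)`, symmetrized in `(m, n)`, has the positive terms
`qₘ qₙ (wₘ - wₙ)(xᵐ yⁿ - xⁿ yᵐ)`. So `t ↦ log F(1 - e^{-t})` is strictly concave, and its
midpoint inequality at `t = -log (1 - x)`, `-log (1 - y)` is the geometric-mean inequality.
-/

open Filter Topology Set

section PowerSeries

variable {p : ℕ → ℝ}

lemma summable_mul_pow_of_tendsto_ratio_one (hp : ∀ n, 0 < p n)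
    (hratio : Tendsto (fun n => p (n + 1) / p n) atTop (𝓝 1)) {x : ℝ} (hx0 : 0 < x)
    (hx1 : x < 1) : Summable fun n => p n * x ^ n := by
  refine summable_of_ratio_test_tendsto_lt_one hx1
    (Eventually.of_forall fun n => (mul_pos (hp n) (pow_pos hx0 n)).ne') ?_
  have hnorm : ∀ n, ‖p n * x ^ n‖ = p n * x ^ n := fun n =>
    Real.norm_of_nonneg (mul_pos (hp n) (pow_pos hx0 n)).le
  simp only [hnorm]
  refine (one_mul x ▸ hratio.mul_const x).congr fun n => ?_
  have := (hp n).ne'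
  field_simp
  ring

lemma summable_natCast_mul_mul_pow_of_tendsto_ratio_one (hp : ∀ n, 0 < p n)
    (hratio : Tendsto (fun n => p (n + 1) / p n) atTop (𝓝 1)) {x : ℝ} (hx0 : 0 < x)
    (hx1 : x < 1) : Summable fun n : ℕ => (n : ℝ) * p n * x ^ n := by
  have hsucc_pos : ∀ n : ℕ, 0 < ((n : ℝ) + 1) * p n := fun n => by have := hp n; positivity
  have hsucc_ratio : Tendsto (fun n : ℕ => ((n + 1 : ℕ) + 1 : ℝ) * p (n + 1) / ((n + 1) * p n))
      atTop (𝓝 1) := by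
    have h := (tendsto_add_mul_div_add_mul_atTop_nhds (2 : ℝ) 1 1 one_ne_zero).mul hratio
    rw [div_one, one_mul] at h
    refine h.congr fun n => ?_
    push_cast
    rw [div_mul_div_comm]
    ring_nf
  refine ((summable_mul_pow_of_tendsto_ratio_one hsucc_pos hsucc_ratio hx0 hx1).sub
    (summable_mul_pow_of_tendsto_ratio_one hp hratio hx0 hx1)).congr fun n => ?_
  ring

lemma Summable.natCast_mul_mul_pow_sub_one {x : ℝ} (hx : x ≠ 0)
    (h : Summable fun n : ℕ => (n : ℝ) * p n * x ^ n) :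
    Summable fun n : ℕ => (n : ℝ) * p n * x ^ (n - 1) := by
  refine (h.mul_left x⁻¹).congr fun n => ?_
  rcases n with _ | n
  · simp
  · rw [Nat.add_sub_cancel, pow_succ]
    field_simp

lemma hasDerivAt_tsum_mul_pow {R : ℝ}
    (hsum : ∀ ρ, 0 < ρ → ρ < R → Summable fun n : ℕ => (n : ℝ) * p n * ρ ^ n) {x : ℝ}
    (hx : |x| < R) :
    HasDerivAt (fun y => ∑' n, p n * y ^ n) (∑' n : ℕ, (n : ℝ) * p n * x ^ (n - 1)) x := by
  obtain ⟨ρ, hxρ, hρR⟩ := exists_between hx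
  have hρ : 0 < ρ := (abs_nonneg x).trans_lt hxρ
  have hu := ((hsum ρ hρ hρR).natCast_mul_mul_pow_sub_one hρ.ne').abs
  refine hasDerivAt_tsum_of_isPreconnected (g := fun n y => p n * y ^ n)
    (g' := fun n y => (n : ℝ) * p n * y ^ (n - 1)) hu isOpen_Ioo isPreconnected_Ioo
    (fun n y _ => ?_) (fun n y hy => ?_) (y₀ := 0) ⟨neg_neg_of_pos hρ, hρ⟩ ?_ (abs_lt.1 hxρ)
  · exact ((hasDerivAt_pow n y).const_mul (p n)).congr_deriv (by ring)
  · simp only [Real.norm_eq_abs, abs_mul, abs_pow, abs_of_pos hρ]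
    gcongr
    exact (abs_lt.2 hy).le
  · exact (hasSum_single 0 fun n hn => by simp [hn]).summable

lemma hasSum_one_sub_mul_tsum_natCast_mul_mul_pow_sub_one {x : ℝ}
    (h : Summable fun n : ℕ => (n : ℝ) * p n * x ^ (n - 1)) :
    HasSum (fun n : ℕ => (((n : ℝ) + 1) * p (n + 1) - n * p n) * x ^ n)
      ((1 - x) * ∑' n : ℕ, (n : ℝ) * p n * x ^ (n - 1)) := by
  have hshift : HasSum (fun n : ℕ => ((n : ℝ) + 1) * p (n + 1) * x ^ n)
      (∑' n : ℕ, (n : ℝ) * p n * x ^ (n - 1)) := by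
    have := (hasSum_nat_add_iff' 1).2 h.hasSum
    simpa using this
  have hmul : HasSum (fun n : ℕ => (n : ℝ) * p n * x ^ n)
      (x * ∑' n : ℕ, (n : ℝ) * p n * x ^ (n - 1)) := by
    refine (h.hasSum.mul_left x).congr_fun fun n => ?_
    rcases n with _ | n
    · simp
    · rw [Nat.add_sub_cancel, pow_succ]
      ring
  rw [show ∀ S : ℝ, (1 - x) * S = S - x * S from fun S => by ring]
  exact (hshift.sub hmul).congr_fun fun n => by ring

end PowerSeries

lemma pow_mul_pow_sub_pow_mul_pow_pos {x y : ℝ} (hx : 0 < x) (hxy : x < y) {m n : ℕ}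
    (hmn : m < n) : 0 < x ^ m * y ^ n - x ^ n * y ^ m := by
  obtain ⟨k, rfl⟩ := Nat.exists_eq_add_of_lt hmn
  have hk : x ^ (k + 1) < y ^ (k + 1) := pow_lt_pow_left₀ hxy hx.le k.succ_ne_zero
  have hxy_pos : 0 < x ^ m * y ^ m := by have := hx.trans hxy; positivity
  have : x ^ m * y ^ (m + k + 1) - x ^ (m + k + 1) * y ^ m
      = x ^ m * y ^ m * (y ^ (k + 1) - x ^ (k + 1)) := by ring
  rw [this]
  exact mul_pos hxy_pos (sub_pos.2 hk)

lemma tsum_pos_of_add_swap_pos {α : Type*} {D : α × α → ℝ} (hD : Summable D)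
    (h0 : ∀ i, 0 ≤ D i + D i.swap) {i : α × α} (hi : 0 < D i + D i.swap) :
    0 < ∑' i, D i := by
  have hswap : Summable fun i : α × α => D i.swap := (Equiv.prodComm α α).summable_iff.2 hD
  have hsym : ∑' i, (D i + D i.swap) = 2 * ∑' i, D i := by
    rw [hD.tsum_add hswap, show ∑' i : α × α, D i.swap = ∑' i, D i from
      (Equiv.prodComm α α).tsum_eq D]
    ring
  have := (hD.add hswap).tsum_pos h0 i hi
  linarith

lemma tsum_mul_tsum_lt_of_strictAnti {p r : ℕ → ℝ} (hp : ∀ n, 0 < p n) (hr : StrictAnti r)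
    {x y : ℝ} (hx : 0 < x) (hxy : x < y) (hpx : Summable fun n => p n * x ^ n)
    (hpy : Summable fun n => p n * y ^ n) (hrx : Summable fun n => r n * p n * x ^ n)
    (hry : Summable fun n => r n * p n * y ^ n) :
    (∑' n, r n * p n * y ^ n) * ∑' n, p n * x ^ n
      < (∑' n, r n * p n * x ^ n) * ∑' n, p n * y ^ n := by
  have hsign : ∀ m n : ℕ, m < n → 0 < (r m - r n) * (x ^ m * y ^ n - x ^ n * y ^ m) :=
    fun m n hmn => mul_pos (sub_pos.2 (hr hmn)) (pow_mul_pow_sub_pow_mul_pow_pos hx hxy hmn)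
  have hsym : ∀ i : ℕ × ℕ, (r i.1 * p i.1 * x ^ i.1 * (p i.2 * y ^ i.2)
        - r i.1 * p i.1 * y ^ i.1 * (p i.2 * x ^ i.2))
      + (r i.2 * p i.2 * x ^ i.2 * (p i.1 * y ^ i.1)
        - r i.2 * p i.2 * y ^ i.2 * (p i.1 * x ^ i.1))
      = p i.1 * p i.2 * ((r i.1 - r i.2) * (x ^ i.1 * y ^ i.2 - x ^ i.2 * y ^ i.1)) :=
    fun i => by ring
  have hnorm := fun {f : ℕ → ℝ} (hf : Summable f) => (summable_norm_iff (E := ℝ)).2 hf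
  have hU := summable_mul_of_summable_norm (hnorm hrx) (hnorm hpy)
  have hV := summable_mul_of_summable_norm (hnorm hry) (hnorm hpx)
  rw [← sub_pos, tsum_mul_tsum_of_summable_norm (hnorm hrx) (hnorm hpy),
    tsum_mul_tsum_of_summable_norm (hnorm hry) (hnorm hpx), ← hU.tsum_sub hV]
  refine tsum_pos_of_add_swap_pos (hU.sub hV) (fun i => ?_) (i := (0, 1)) ?_
  · rw [Prod.fst_swap, Prod.snd_swap, hsym]
    have hpp := mul_pos (hp i.1) (hp i.2)
    rcases lt_trichotomy i.1 i.2 with h | h | h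
    · exact (mul_pos hpp (hsign _ _ h)).le
    · simp [h]
    · nlinarith [mul_pos hpp (hsign _ _ h)]
  · rw [Prod.fst_swap, Prod.snd_swap, hsym]
    exact mul_pos (mul_pos (hp 0) (hp 1)) (hsign 0 1 one_pos)

lemma one_sub_exp_neg_mem_Ioo {t : ℝ} (ht : 0 < t) : 1 - Real.exp (-t) ∈ Ioo 0 1 :=
  ⟨sub_pos.2 (Real.exp_lt_one_iff.2 (neg_neg_of_pos ht)), sub_lt_self _ (Real.exp_pos _)⟩

lemma sqrt_mul_lt_of_strictConcaveOn_log_one_sub_exp_neg {F : ℝ → ℝ}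
    (hF : ∀ x ∈ Ioo (0 : ℝ) 1, 0 < F x)
    (hconc : StrictConcaveOn ℝ (Ioi 0) fun t => Real.log (F (1 - Real.exp (-t))))
    {x y : ℝ} (hx : x ∈ Ioo 0 1) (hy : y ∈ Ioo 0 1) (hxy : x ≠ y) :
    Real.sqrt (F x * F y) < F (1 - Real.sqrt ((1 - x) * (1 - y))) := by
  have hpreimage : ∀ z ∈ Ioo (0 : ℝ) 1, ∃ s, 0 < s ∧ 1 - Real.exp (-s) = z := fun z hz =>
    ⟨-Real.log (1 - z), neg_pos.2 (Real.log_neg (sub_pos.2 hz.2) (sub_lt_self 1 hz.1)), by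
      rw [neg_neg, Real.exp_log (sub_pos.2 hz.2), sub_sub_cancel]⟩
  obtain ⟨s, hs, rfl⟩ := hpreimage x hx
  obtain ⟨t, ht, rfl⟩ := hpreimage y hy
  have hmid : Real.sqrt ((1 - (1 - Real.exp (-s))) * (1 - (1 - Real.exp (-t))))
      = Real.exp (-((1 / 2 : ℝ) • s + (1 / 2 : ℝ) • t)) := by
    rw [sub_sub_cancel, sub_sub_cancel, ← Real.exp_add, ← Real.exp_half, smul_eq_mul, smul_eq_mul]
    ring_nf
  have key := hconc.2 hs ht (fun hst => hxy (hst ▸ rfl)) one_half_pos one_half_pos (add_halves 1)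
  have hFx := hF _ hx
  have hFy := hF _ hy
  rw [hmid, ← Real.log_lt_log_iff (Real.sqrt_pos.2 (mul_pos hFx hFy))
    (hF _ (one_sub_exp_neg_mem_Ioo (by positivity))), Real.log_sqrt (mul_pos hFx hFy).le,
    Real.log_mul hFx.ne' hFy.ne']
  simp only [smul_eq_mul] at key ⊢
  linarith

noncomputable def hyperCoeff (a b c : ℝ) (n : ℕ) : ℝ :=
  ascFac a n * ascFac b n / (ascFac c n * n.factorial)

noncomputable def hyperWeight (a b c : ℝ) (n : ℕ) : ℝ :=
  (a + n) * (b + n) / (c + n) - n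

lemma ascFac_pos {a : ℝ} (ha : 0 < a) (n : ℕ) : 0 < ascFac a n := by
  induction n with
  | zero => exact one_pos
  | succ n ih => exact mul_pos ih (by positivity)

section Hypergeometric

variable {a b c : ℝ}

lemma hyperCoeff_pos (ha : 0 < a) (hb : 0 < b) (hc : 0 < c) (n : ℕ) :
    0 < hyperCoeff a b c n := by
  have := ascFac_pos ha n
  have := ascFac_pos hb n
  have := ascFac_pos hc n
  unfold hyperCoeff
  positivity

lemma hyperCoeff_succ (hc : 0 < c) (n : ℕ) :
    hyperCoeff a b c (n + 1) = hyperCoeff a b c n * ((a + n) * (b + n) / ((c + n) * (n + 1))) := by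
  have := (ascFac_pos hc n).ne'
  have : c + n ≠ 0 := by positivity
  simp only [hyperCoeff, ascFac, Nat.factorial_succ, Nat.cast_mul, Nat.cast_succ]
  field_simp

lemma succ_mul_hyperCoeff_succ_sub (hc : 0 < c) (n : ℕ) :
    ((n : ℝ) + 1) * hyperCoeff a b c (n + 1) - n * hyperCoeff a b c n
      = hyperWeight a b c n * hyperCoeff a b c n := by
  have : c + n ≠ 0 := by positivity
  rw [hyperCoeff_succ hc, hyperWeight]
  field_simp

lemma hyperWeight_strictAnti (hc : 0 < c) (h : (a - c) * (b - c) > 0) :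
    StrictAnti (hyperWeight a b c) := by
  refine strictAnti_nat_of_succ_lt fun n => ?_
  have : hyperWeight a b c n - hyperWeight a b c (n + 1)
      = (a - c) * (b - c) / ((c + n) * (c + n + 1)) := by
    have : c + n ≠ 0 := by positivity
    have : c + n + 1 ≠ 0 := by positivity
    simp only [hyperWeight, Nat.cast_succ]
    field_simp
    ring
  have : 0 < (a - c) * (b - c) / ((c + n) * (c + n + 1)) := by positivity
  linarith

lemma tendsto_hyperCoeff_succ_div (ha : 0 < a) (hb : 0 < b) (hc : 0 < c) :
    Tendsto (fun n => hyperCoeff a b c (n + 1) / hyperCoeff a b c n) atTop (𝓝 1) := by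
  have h := (tendsto_add_mul_div_add_mul_atTop_nhds a c 1 one_ne_zero).mul
    (tendsto_add_mul_div_add_mul_atTop_nhds b 1 1 one_ne_zero)
  rw [div_one, one_mul] at h
  refine h.congr fun n => ?_
  rw [hyperCoeff_succ hc, mul_div_cancel_left₀ _ (hyperCoeff_pos ha hb hc n).ne', div_mul_div_comm]
  ring_nf

lemma summable_hyperCoeff_mul_pow (ha : 0 < a) (hb : 0 < b) (hc : 0 < c) {x : ℝ}
    (hx : x ∈ Ioo 0 1) :
    Summable fun n => hyperCoeff a b c n * x ^ n :=
  summable_mul_pow_of_tendsto_ratio_one (hyperCoeff_pos ha hb hc)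
    (tendsto_hyperCoeff_succ_div ha hb hc) hx.1 hx.2

lemma hyperF_pos (ha : 0 < a) (hb : 0 < b) (hc : 0 < c) {x : ℝ} (hx : x ∈ Ioo 0 1) :
    0 < hyperF a b c x :=
  (summable_hyperCoeff_mul_pow ha hb hc hx).tsum_pos
    (fun n => (mul_pos (hyperCoeff_pos ha hb hc n) (pow_pos hx.1 n)).le) 0
    (by simpa using hyperCoeff_pos ha hb hc 0)

lemma summable_natCast_mul_hyperCoeff_mul_pow_sub_one (ha : 0 < a) (hb : 0 < b) (hc : 0 < c)
    {x : ℝ} (hx : x ∈ Ioo 0 1) :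
    Summable fun n : ℕ => (n : ℝ) * hyperCoeff a b c n * x ^ (n - 1) :=
  (summable_natCast_mul_mul_pow_of_tendsto_ratio_one (hyperCoeff_pos ha hb hc)
    (tendsto_hyperCoeff_succ_div ha hb hc) hx.1 hx.2).natCast_mul_mul_pow_sub_one hx.1.ne'

lemma hasDerivAt_hyperF (ha : 0 < a) (hb : 0 < b) (hc : 0 < c) {x : ℝ} (hx : |x| < 1) :
    HasDerivAt (hyperF a b c) (∑' n : ℕ, (n : ℝ) * hyperCoeff a b c n * x ^ (n - 1)) x :=
  hasDerivAt_tsum_mul_pow (fun _ hρ0 hρ1 =>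
    summable_natCast_mul_mul_pow_of_tendsto_ratio_one (hyperCoeff_pos ha hb hc)
      (tendsto_hyperCoeff_succ_div ha hb hc) hρ0 hρ1) hx

lemma hasSum_hyperWeight_mul_hyperCoeff_mul_pow (ha : 0 < a) (hb : 0 < b) (hc : 0 < c) {x : ℝ}
    (hx : x ∈ Ioo 0 1) :
    HasSum (fun n => hyperWeight a b c n * hyperCoeff a b c n * x ^ n)
      ((1 - x) * ∑' n : ℕ, (n : ℝ) * hyperCoeff a b c n * x ^ (n - 1)) := by
  simpa only [succ_mul_hyperCoeff_succ_sub hc] using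
    hasSum_one_sub_mul_tsum_natCast_mul_mul_pow_sub_one
      (summable_natCast_mul_hyperCoeff_mul_pow_sub_one ha hb hc hx)

lemma tsum_hyperWeight_div_hyperF_lt (ha : 0 < a) (hb : 0 < b) (hc : 0 < c)
    (h : (a - c) * (b - c) > 0) {x y : ℝ} (hx : x ∈ Ioo 0 1) (hy : y ∈ Ioo 0 1) (hxy : x < y) :
    (∑' n, hyperWeight a b c n * hyperCoeff a b c n * y ^ n) / hyperF a b c y
      < (∑' n, hyperWeight a b c n * hyperCoeff a b c n * x ^ n) / hyperF a b c x := by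
  rw [div_lt_div_iff₀ (hyperF_pos ha hb hc hy) (hyperF_pos ha hb hc hx)]
  exact tsum_mul_tsum_lt_of_strictAnti (hyperCoeff_pos ha hb hc) (hyperWeight_strictAnti hc h)
    hx.1 hxy (summable_hyperCoeff_mul_pow ha hb hc hx) (summable_hyperCoeff_mul_pow ha hb hc hy)
    (hasSum_hyperWeight_mul_hyperCoeff_mul_pow ha hb hc hx).summable
    (hasSum_hyperWeight_mul_hyperCoeff_mul_pow ha hb hc hy).summable

lemma hasDerivAt_log_hyperF_one_sub_exp_neg (ha : 0 < a) (hb : 0 < b) (hc : 0 < c) {t : ℝ}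
    (ht : 0 < t) :
    HasDerivAt (fun s => Real.log (hyperF a b c (1 - Real.exp (-s))))
      ((∑' n, hyperWeight a b c n * hyperCoeff a b c n * (1 - Real.exp (-t)) ^ n)
        / hyperF a b c (1 - Real.exp (-t))) t := by
  set x := 1 - Real.exp (-t)
  have hx : x ∈ Ioo 0 1 := one_sub_exp_neg_mem_Ioo ht
  have hinner : HasDerivAt (fun s => 1 - Real.exp (-s)) (1 - x) t :=
    ((hasDerivAt_neg t).exp.const_sub 1).congr_deriv (by simp [x])
  have hF := hasDerivAt_hyperF ha hb hc (abs_lt.2 ⟨by linarith [hx.1], hx.2⟩)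
  rw [(hasSum_hyperWeight_mul_hyperCoeff_mul_pow ha hb hc hx).tsum_eq]
  have hcomp : HasDerivAt (fun s => hyperF a b c (1 - Real.exp (-s)))
      ((∑' n : ℕ, (n : ℝ) * hyperCoeff a b c n * x ^ (n - 1)) * (1 - x)) t :=
    HasDerivAt.comp (h₂ := hyperF a b c) t hF hinner
  convert hcomp.log (hyperF_pos ha hb hc hx).ne' using 1
  ring

lemma strictConcaveOn_log_hyperF_one_sub_exp_neg (ha : 0 < a) (hb : 0 < b) (hc : 0 < c)
    (h : (a - c) * (b - c) > 0) :
    StrictConcaveOn ℝ (Ioi 0) fun t => Real.log (hyperF a b c (1 - Real.exp (-t))) := by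
  refine StrictAntiOn.strictConcaveOn_of_deriv (convex_Ioi 0) (fun t ht =>
    (hasDerivAt_log_hyperF_one_sub_exp_neg ha hb hc ht).continuousAt.continuousWithinAt) ?_
  rw [interior_Ioi]
  intro s hs t ht hst
  rw [(hasDerivAt_log_hyperF_one_sub_exp_neg ha hb hc hs).deriv,
    (hasDerivAt_log_hyperF_one_sub_exp_neg ha hb hc ht).deriv]
  refine tsum_hyperWeight_div_hyperF_lt ha hb hc h (one_sub_exp_neg_mem_Ioo hs)
    (one_sub_exp_neg_mem_Ioo ht) ?_
  gcongr

end Hypergeometric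

theorem stmt11 (a b c : ℝ) (ha : 0 < a) (hb : 0 < b) (hc : 0 < c)
    (h : (a - c) * (b - c) > 0) :
    ConcaveOn ℝ (Set.Ioi 0)
        (fun t => Real.log (hyperF a b c (1 - Real.exp (-t)))) ∧
      ∀ x ∈ Set.Ioo (0:ℝ) 1, ∀ y ∈ Set.Ioo (0:ℝ) 1,
        Real.sqrt (hyperF a b c x * hyperF a b c y) ≤
            hyperF a b c (1 - Real.sqrt ((1 - x) * (1 - y))) ∧
          (Real.sqrt (hyperF a b c x * hyperF a b c y) =
              hyperF a b c (1 - Real.sqrt ((1 - x) * (1 - y))) ↔ x = y) := by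
  have hconc := strictConcaveOn_log_hyperF_one_sub_exp_neg ha hb hc h
  refine ⟨hconc.concaveOn, fun x hx y hy => ?_⟩
  rcases eq_or_ne x y with rfl | hxy
  · rw [Real.sqrt_mul_self (hyperF_pos ha hb hc hx).le, Real.sqrt_mul_self (sub_pos.2 hx.2).le,
      sub_sub_cancel]
    exact ⟨le_rfl, iff_of_true rfl rfl⟩
  · have hlt := sqrt_mul_lt_of_strictConcaveOn_log_one_sub_exp_neg
      (fun _ hz => hyperF_pos ha hb hc hz) hconc hx hy hxy
    exact ⟨hlt.le, iff_of_false hlt.ne hxy⟩
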